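/- Let s ≥ 2 and k ≥ 1 be integers, let θ be a bijection of the k-blocks (Fin k → Fin s) which is neither the identity map nor the digitwise complement map b ↦ (fun i => s − 1 − b i), and let F : ℝ → ℝ satisfy: for every admissible digit sequence a, F(∑_{n=0}^∞ a n / s^{n+1}) = ∑_{n=0}^∞ (Θ a) n / s^{n+1}. Then F is nowhere differentiable on [0,1): for every x ∈ [0,1), F is not differentiable at x. (Paper's Theorem 2 for functions of type f^s_k: every f^s_k other than x ↦ x and x ↦ 1 − x is nowhere differentiable.) -/

import Mathlib

/-!
Write `x = 0.a₀a₁a₂…` in base `s` and pick a block `b` of `k` digits that occurs at infinitely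
many block positions `m` of `x`. Replacing the `m`-th block by any `c` moves `x` by
`(v c - v b) / s ^ (k m + k)` and moves `F x` by `(v (θ c) - v (θ b)) / s ^ (k m + k)`, where `v`
reads a block as a base-`s` integer. Letting `m → ∞`, differentiability of `F` at `x` with
derivative `L` forces `v (θ c) - v (θ b) = L (v c - v b)` for every `c`. So `θ`, read through `v`,
is an affine permutation of `{0, …, s ^ k - 1}`: the identity or `i ↦ s ^ k - 1 - i`, that is,
`θ` is the identity or the digitwise complement.
-/

open Filter Topology Real

variable {s k : ℕ}

theorem Filter.exists_frequently_eq_of_finite {β : Type*} [Finite β] (f : ℕ → β) :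
    ∃ b, ∃ᶠ n in atTop, f n = b := by
  obtain ⟨b, hb⟩ := Finite.exists_infinite_fiber f
  exact ⟨b, Nat.frequently_atTop_iff_infinite.mpr (Set.infinite_coe_iff.mp hb)⟩

theorem HasDerivAt.mul_eq_of_frequently_eq {ι : Type*} {l : Filter ι} {F : ℝ → ℝ}
    {L x d e : ℝ} {ε : ι → ℝ} (hF : HasDerivAt F L x) (hε : Tendsto ε l (𝓝[≠] 0))
    (h : ∃ᶠ j in l, F (x + d * ε j) = F x + e * ε j) : L * d = e := by
  set S := {j | F (x + d * ε j) = F x + e * ε j}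
  have : (l ⊓ 𝓟 S).NeBot := frequently_iff_neBot.mp h
  replace hε := hε.mono_left (inf_le_left (b := 𝓟 S))
  replace h : ∀ᶠ j in l ⊓ 𝓟 S, j ∈ S := mem_inf_of_right (mem_principal_self S)
  have hg : HasDerivAt (fun t => F (x + d * t)) (L * d) 0 := by
    have hF0 : HasDerivAt F L (x + d * 0) := by rwa [mul_zero, add_zero]
    exact hF0.comp 0 (((hasDerivAt_id 0).const_mul d).const_add x |>.congr_deriv (by simp))
  refine tendsto_nhds_unique ((hasDerivAt_iff_tendsto_slope.mp hg).comp hε)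
    (tendsto_const_nhds.congr' ?_)
  filter_upwards [h, (tendsto_nhdsWithin_iff.mp hε).2] with j hj hj0
  rw [Function.comp_apply, slope_def_field, hj, mul_zero, add_zero, sub_zero, add_sub_cancel_left,
    mul_div_cancel_right₀ _ hj0]

theorem Equiv.Perm.eq_one_or_eq_revPerm_of_affine {n : ℕ} (σ : Equiv.Perm (Fin n)) {L C : ℝ}
    (h : ∀ i, (σ i : ℝ) = L * i + C) : σ = 1 ∨ σ = Fin.revPerm := by
  have hcmp : ∀ i j, σ i < σ j ↔ L * i < L * j := fun i j => by
    rw [Fin.lt_def, ← Nat.cast_lt (α := ℝ), h, h, add_lt_add_iff_right]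
  rcases lt_trichotomy L 0 with hL | rfl | hL
  · right
    have hmono : StrictMono (Fin.rev ∘ σ) := fun i j hij => by
      rw [Function.comp_apply, Function.comp_apply, Fin.rev_lt_rev, hcmp]
      exact mul_lt_mul_of_neg_left (by exact_mod_cast hij) hL
    refine Equiv.ext fun i => ?_
    simpa [Fin.rev_eq_iff] using hmono.apply_eq (x := i)
  · left
    simp only [zero_mul, zero_add] at h
    refine Equiv.ext fun i => σ.injective (Fin.ext ?_)
    exact_mod_cast (h (σ i)).trans (h i).symm
  · left
    have hmono : StrictMono σ := fun i j hij => by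
      rw [hcmp]
      exact mul_lt_mul_of_pos_left (by exact_mod_cast hij) hL
    exact Equiv.ext fun i => hmono.apply_eq

def Admissible (a : ℕ → Fin s) : Prop :=
  ¬ ∃ N, ∀ n ≥ N, (a n : ℕ) = s - 1

theorem Real.ofDigits_eq_tsum_div (a : ℕ → Fin s) :
    ofDigits a = ∑' n, ((a n : ℕ) : ℝ) / (s : ℝ) ^ (n + 1) := by
  simp only [ofDigits, ofDigitsTerm, div_eq_mul_inv]

theorem Real.admissible_digits [NeZero s] (hs : 1 < s) {x : ℝ} (hx : x ∈ Set.Ico 0 1) :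
    Admissible (digits x s) := by
  rintro ⟨N, hN⟩
  have htail : (fun i => digits x s (i + N)) = fun _ => ⟨s - 1, Nat.sub_one_lt_of_lt hs⟩ :=
    funext fun i => Fin.ext (hN _ (Nat.le_add_left N i))
  have hx' := ofDigits_eq_sum_add_ofDigits (digits x s) N
  rw [ofDigits_digits hs hx, htail, ofDigits_const_last_eq_one' hs, mul_one] at hx'
  -- `s ^ N * x` would be an integer plus one, contradicting the choice of the digits by floors
  have hfloor := ofDigits_digits_sum_eq (b := s) hx N
  have hpow : (s : ℝ) ^ N ≠ 0 := pow_ne_zero _ (Nat.cast_ne_zero.mpr (NeZero.ne s))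
  have hint : (s : ℝ) ^ N * x = ⌊(s : ℝ) ^ N * x⌋₊ + 1 := by
    conv_lhs => rw [hx', mul_add, hfloor, mul_inv_cancel₀ hpow]
  linarith [Nat.lt_floor_add_one ((s : ℝ) ^ N * x)]

/-- The integer whose base-`s` digits, most significant first, form the block. -/
def blockValue (s k : ℕ) : (Fin k → Fin s) ≃ Fin (s ^ k) :=
  (Equiv.arrowCongr Fin.revPerm (Equiv.refl _)).trans finFunctionFinEquiv

theorem blockValue_apply (c : Fin k → Fin s) :
    (blockValue s k c : ℕ) = ∑ i : Fin k, (c i.rev : ℕ) * s ^ (i : ℕ) := by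
  simp [blockValue]

theorem blockValue_rev_comp (c : Fin k → Fin s) :
    blockValue s k (Fin.rev ∘ c) = (blockValue s k c).rev := by
  have hdigit (j : Fin s) : ((j.rev : ℕ) : ℤ) = s - 1 - j := by
    have := j.isLt
    rw [Fin.val_rev, Nat.cast_sub (by omega)]
    push_cast
    ring
  have hle : (blockValue s k c : ℕ) + 1 ≤ s ^ k := (blockValue s k c).isLt
  apply Fin.ext
  rw [Fin.val_rev]
  zify [hle]
  have hgeom : ∑ i : Fin k, ((s : ℤ) - 1) * s ^ (i : ℕ) = s ^ k - 1 := by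
    rw [← Finset.mul_sum, Fin.sum_univ_eq_sum_range (fun i => (s : ℤ) ^ i), mul_comm, geom_sum_mul]
  simp only [blockValue_apply, Function.comp_apply, Nat.cast_sum, Nat.cast_mul, Nat.cast_pow,
    hdigit]
  rw [show (s : ℤ) ^ k = ∑ i : Fin k, ((s : ℤ) - 1) * s ^ (i : ℕ) + 1 by rw [hgeom]; ring,
    add_sub_add_right_eq_sub, ← Finset.sum_sub_distrib]
  simp only [sub_mul]

theorem sum_div_pow_eq_blockValue (c : Fin k → Fin s) (n : ℕ) :
    ∑ i : Fin k, ((c i : ℕ) : ℝ) / (s : ℝ) ^ (n + i + 1) =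
      (blockValue s k c : ℝ) / s ^ (n + k) := by
  rw [blockValue_apply, Nat.cast_sum, Finset.sum_div]
  refine Fintype.sum_equiv Fin.revPerm _ _ fun i => ?_
  have hs : (s : ℝ) ≠ 0 := Nat.cast_ne_zero.mpr (Fin.pos (c i)).ne'
  have hexp : n + k = n + i + 1 + i.rev := by rw [Fin.val_rev]; omega
  rw [Fin.revPerm_apply, Fin.rev_rev, hexp, pow_add _ (n + i + 1), Nat.cast_mul, Nat.cast_pow,
    mul_div_mul_right _ _ (pow_ne_zero _ hs)]

theorem eq_self_or_eq_rev_comp_of_blockValue_affine (θ : Equiv.Perm (Fin k → Fin s)) {L C : ℝ}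
    (h : ∀ c, (blockValue s k (θ c) : ℝ) = L * blockValue s k c + C) :
    (∀ c, θ c = c) ∨ ∀ c, θ c = Fin.rev ∘ c := by
  set σ : Equiv.Perm (Fin (s ^ k)) := ((blockValue s k).symm.trans θ).trans (blockValue s k)
  have hσ : ∀ i, (σ i : ℝ) = L * i + C := fun i => by
    simpa [σ] using h ((blockValue s k).symm i)
  refine (σ.eq_one_or_eq_revPerm_of_affine hσ).imp (fun h1 c => ?_) (fun hrev c => ?_)
  · apply (blockValue s k).injective
    simpa [σ] using Equiv.ext_iff.mp h1 (blockValue s k c)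
  · apply (blockValue s k).injective
    rw [blockValue_rev_comp]
    simpa [σ] using Equiv.ext_iff.mp hrev (blockValue s k c)

def blocks (k : ℕ) [NeZero k] : (ℕ → Fin s) ≃ (ℕ → Fin k → Fin s) :=
  ((Nat.divModEquiv k).arrowCongr (Equiv.refl _)).trans (Equiv.curry _ _ _)

section Blocks

variable [NeZero k]

theorem blocks_apply (a : ℕ → Fin s) (m : ℕ) (i : Fin k) : blocks k a m i = a (k * m + i) := by
  simp [blocks, mul_comm]

theorem blocks_symm_apply (g : ℕ → Fin k → Fin s) (n : ℕ) :
    (blocks k).symm g n = g (n / k) (Fin.ofNat k n) := by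
  simp [blocks]

theorem blocks_eq_comp_of_apply {θ : (Fin k → Fin s) → Fin k → Fin s}
    {Θ : (ℕ → Fin s) → ℕ → Fin s}
    (hΘ : ∀ a m (i : Fin k), Θ a (k * m + i) = θ (fun j => a (k * m + j)) i) (a : ℕ → Fin s) :
    blocks k (Θ a) = θ ∘ blocks k a := by
  funext m i
  rw [Function.comp_apply, blocks_apply, hΘ]
  exact congrArg (θ · i) (funext fun j => (blocks_apply a m j).symm)

theorem Admissible.of_blocks_eq_of_ne {u w : ℕ → Fin s} {m : ℕ} (hw : Admissible w)
    (h : ∀ m' ≠ m, blocks k u m' = blocks k w m') : Admissible u := by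
  rintro ⟨N, hN⟩
  refine hw ⟨k * (N + m + 1), fun n hn => ?_⟩
  have hk : N + m + 1 ≤ k * (N + m + 1) := Nat.le_mul_of_pos_left _ (NeZero.pos k)
  have hm : m + 1 ≤ n / k := (Nat.le_div_iff_mul_le (NeZero.pos k)).mpr (by nlinarith)
  have huw : u n = w n := by
    rw [← (blocks k).symm_apply_apply u, ← (blocks k).symm_apply_apply w, blocks_symm_apply,
      blocks_symm_apply, h _ (by omega)]
  rw [← huw]
  exact hN n (by omega)

theorem hasSum_blockValue (a : ℕ → Fin s) :
    HasSum (fun m => (blockValue s k (blocks k a m) : ℝ) / (s : ℝ) ^ (k * m + k)) (ofDigits a) := by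
  have h := (Nat.divModEquiv k).symm.hasSum_iff.mpr (summable_ofDigitsTerm (digits := a)).hasSum
  refine h.prod_fiberwise fun m => ?_
  convert hasSum_fintype fun i : Fin k => ofDigitsTerm a (m * k + i) using 1
  · rfl
  rw [← sum_div_pow_eq_blockValue]
  simp [ofDigitsTerm, blocks_apply, div_eq_mul_inv, mul_comm]

theorem ofDigits_sub_ofDigits_of_blocks_eq_of_ne {u w : ℕ → Fin s} {m : ℕ}
    (h : ∀ m' ≠ m, blocks k u m' = blocks k w m') :
    ofDigits u - ofDigits w =
      ((blockValue s k (blocks k u m) : ℝ) - blockValue s k (blocks k w m)) /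
        (s : ℝ) ^ (k * m + k) := by
  have hu := hasSum_blockValue (k := k) u
  have hw := hasSum_blockValue (k := k) w
  rw [← hu.tsum_eq, ← hw.tsum_eq, ← hu.summable.tsum_sub hw.summable,
    tsum_eq_single m fun m' hm' => by rw [h m' hm', sub_self], sub_div]

theorem mul_sub_blockValue_eq_of_hasDerivAt (hs : 1 < s) {θ : (Fin k → Fin s) → Fin k → Fin s}
    {Θ : (ℕ → Fin s) → ℕ → Fin s} (hΘ : ∀ a, blocks k (Θ a) = θ ∘ blocks k a) {F : ℝ → ℝ}
    (hF : ∀ a, Admissible a → F (ofDigits a) = ofDigits (Θ a)) {a : ℕ → Fin s}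
    (ha : Admissible a) {L : ℝ} (hL : HasDerivAt F L (ofDigits a)) {b : Fin k → Fin s}
    (hb : ∃ᶠ m in atTop, blocks k a m = b) (c : Fin k → Fin s) :
    L * ((blockValue s k c : ℝ) - blockValue s k b) =
      (blockValue s k (θ c) : ℝ) - blockValue s k (θ b) := by
  have hε : Tendsto (fun m : ℕ => ((s : ℝ) ^ (k * m + k))⁻¹) atTop (𝓝[≠] 0) := by
    have hlin : Tendsto (fun m : ℕ => k * m + k) atTop atTop :=
      tendsto_atTop_mono
        (fun m => (Nat.le_mul_of_pos_left m (NeZero.pos k)).trans (Nat.le_add_right _ _)) tendsto_id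
    exact (tendsto_inv_atTop_nhdsGT_zero.mono_right (nhdsGT_le_nhdsNE 0)).comp
      ((tendsto_pow_atTop_atTop_of_one_lt (by exact_mod_cast hs)).comp hlin)
  refine hL.mul_eq_of_frequently_eq hε (hb.mono fun m hm => ?_)
  set a' := (blocks k).symm (Function.update (blocks k a) m c)
  have hm' : blocks k a' m = c := by simp [a']
  have hother : ∀ m' ≠ m, blocks k a' m' = blocks k a m' := fun m' hm' => by
    simp [a', Function.update_of_ne hm']
  have hΘother : ∀ m' ≠ m, blocks k (Θ a') m' = blocks k (Θ a) m' := fun m' hm' => by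
    rw [hΘ, hΘ, Function.comp_apply, Function.comp_apply, hother m' hm']
  have hx := ofDigits_sub_ofDigits_of_blocks_eq_of_ne hother
  have hy := ofDigits_sub_ofDigits_of_blocks_eq_of_ne hΘother
  rw [hm', hm] at hx
  rw [hΘ, hΘ, Function.comp_apply, Function.comp_apply, hm', hm] at hy
  rw [← div_eq_mul_inv, ← div_eq_mul_inv, ← hx, ← hy, hF a ha, add_sub_cancel, add_sub_cancel]
  exact hF a' (ha.of_blocks_eq_of_ne hother)

end Blocks

theorem stmt_14 (s k : ℕ) (hs : 2 ≤ s) (hk : 1 ≤ k)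
    (θ : (Fin k → Fin s) ≃ (Fin k → Fin s))
    (hθid : ¬ ∀ b : Fin k → Fin s, θ b = b)
    (hθcompl : ¬ ∀ b : Fin k → Fin s, θ b = fun i => ⟨s - 1 - (b i : ℕ), by omega⟩)
    (Θ : (ℕ → Fin s) → (ℕ → Fin s))
    (hΘ : ∀ (a : ℕ → Fin s) (m : ℕ) (i : Fin k),
      Θ a (k * m + (i : ℕ)) = θ (fun j => a (k * m + (j : ℕ))) i)
    (F : ℝ → ℝ)
    (hF : ∀ a : ℕ → Fin s, (¬ ∃ N, ∀ n ≥ N, (a n : ℕ) = s - 1) →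
      F (∑' n : ℕ, ((a n : ℕ) : ℝ) / (s : ℝ) ^ (n + 1)) =
        ∑' n : ℕ, ((Θ a n : ℕ) : ℝ) / (s : ℝ) ^ (n + 1)) :
    ∀ x ∈ Set.Ico (0 : ℝ) 1, ¬ DifferentiableAt ℝ F x := by
  intro x hx hdiff
  have : NeZero k := ⟨by omega⟩
  have : NeZero s := ⟨by omega⟩
  have hs1 : 1 < s := by omega
  have hF' : ∀ a, Admissible a → F (ofDigits a) = ofDigits (Θ a) := fun a ha => by
    simpa only [ofDigits_eq_tsum_div] using hF a ha
  rw [← ofDigits_digits hs1 hx] at hdiff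
  set L := deriv F (ofDigits (digits x s))
  obtain ⟨b, hb⟩ := exists_frequently_eq_of_finite (blocks k (digits x s))
  have haff := mul_sub_blockValue_eq_of_hasDerivAt hs1 (blocks_eq_comp_of_apply hΘ) hF'
    (admissible_digits hs1 hx) hdiff.hasDerivAt hb
  obtain hid | hrev := eq_self_or_eq_rev_comp_of_blockValue_affine θ (L := L)
    (C := blockValue s k (θ b) - L * blockValue s k b) fun c => by linarith [haff c]
  · exact hθid hid
  · refine hθcompl fun c => (hrev c).trans (funext fun i => Fin.ext ?_)
    simp only [Function.comp_apply, Fin.val_rev]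
    omega
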